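/- For odd d > 2, the matrices P = [[-1,0],[d,1]], -Q = [[1,d],[0,-1]], X = [[d,1],[-1,0]], and Y = [[0,1],[1,0]] each map the open cone spanned by u = (2, -d+√(d²-4)) and v = (-2, d+√(d²-4)) in ℝ² to itself. -/
import Mathlib

open Matrix

noncomputable def kaehlerConeYd (d : ℤ) : Set (Fin 2 → ℝ) :=
  {w | ∃ s t : ℝ, 0 < s ∧ 0 < t ∧
    w = s • ![(2 : ℝ), -(d : ℝ) + Real.sqrt ((d : ℝ)^2 - 4)]
      + t • ![(-2 : ℝ), (d : ℝ) + Real.sqrt ((d : ℝ)^2 - 4)]}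

/-- For odd d > 2, the matrices P = [[-1,0],[d,1]], -Q = [[1,d],[0,-1]],
X = [[d,1],[-1,0]] and Y = [[0,1],[1,0]] each map the open cone spanned by
u = (2, -d+√(d²-4)) and v = (-2, d+√(d²-4)) to itself. -/
theorem stmt_18 (d : ℤ) (hd : Odd d) (hpos : 2 < d) :
    (∀ w ∈ kaehlerConeYd d,
      ((!![-1, 0; d, 1] : Matrix (Fin 2) (Fin 2) ℤ).map (Int.cast : ℤ → ℝ)).mulVec w
        ∈ kaehlerConeYd d) ∧
    (∀ w ∈ kaehlerConeYd d,
      ((!![1, d; 0, -1] : Matrix (Fin 2) (Fin 2) ℤ).map (Int.cast : ℤ → ℝ)).mulVec w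
        ∈ kaehlerConeYd d) ∧
    (∀ w ∈ kaehlerConeYd d,
      ((!![d, 1; -1, 0] : Matrix (Fin 2) (Fin 2) ℤ).map (Int.cast : ℤ → ℝ)).mulVec w
        ∈ kaehlerConeYd d) ∧
    (∀ w ∈ kaehlerConeYd d,
      ((!![0, 1; 1, 0] : Matrix (Fin 2) (Fin 2) ℤ).map (Int.cast : ℤ → ℝ)).mulVec w
        ∈ kaehlerConeYd d) := by
  have hD2 : (2 : ℝ) < (d : ℝ) := by exact_mod_cast hpos
  have hr2 : Real.sqrt ((d : ℝ)^2 - 4) ^ 2 = (d : ℝ)^2 - 4 := by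
    rw [Real.sq_sqrt]; nlinarith
  have hr0 : 0 ≤ Real.sqrt ((d : ℝ)^2 - 4) := Real.sqrt_nonneg _
  simp only [kaehlerConeYd, Set.mem_setOf_eq]
  generalize Real.sqrt ((d : ℝ)^2 - 4) = r at hr2 hr0 ⊢
  set D : ℝ := (d : ℝ) with hD
  have hrd : r < D := by nlinarith
  have hDr : 0 < D + r := by linarith
  have hdr : 0 < D - r := by linarith
  refine ⟨?_, ?_, ?_, ?_⟩ <;>
    rintro w ⟨s, t, hs, ht, rfl⟩
  · refine ⟨t, s, ht, hs, ?_⟩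
    funext i; fin_cases i <;>
      simp [Matrix.mulVec, dotProduct, Fin.sum_univ_two] <;> ring
  · refine ⟨t * (D ^ 2 - 2 + D * r) / 2, s * (D - r) ^ 2 / 4,
      by nlinarith [mul_nonneg (by linarith : (0:ℝ) ≤ D) hr0], by positivity, ?_⟩
    funext i; fin_cases i <;>
      simp [Matrix.mulVec, dotProduct, Fin.sum_univ_two]
    · linear_combination (s / 2) * hr2
    · linear_combination (-(t * D / 2) + s * (D - r) / 4) * hr2
  · refine ⟨s * (D + r) / 2, t * (D - r) / 2, by positivity, by positivity, ?_⟩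
    funext i; fin_cases i <;>
      simp [Matrix.mulVec, dotProduct, Fin.sum_univ_two]
    · ring
    · linear_combination ((t - s) / 2) * hr2
  · refine ⟨t * (D + r) / 2, s * (D - r) / 2, by positivity, by positivity, ?_⟩
    funext i; fin_cases i <;>
      simp [Matrix.mulVec, dotProduct, Fin.sum_univ_two]
    · ring
    · linear_combination ((s - t) / 2) * hr2
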